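/- Let t be a k-ary polymorphism of 𝔅, let i ∈ {0, ..., n}, and let l_{a_1}, l_{a_2}, l_i, l_{i+1}, ..., l_n ∈ ℕ satisfy l_{a_1} + l_{a_2} + l_i + l_{i+1} + ⋯ + l_n = k and l_{a_1} + l_{a_2} ≤ l_i. Suppose t(a_1, ..., a_1, a_2, ..., a_2, i, ..., i, i+1, ..., i+1, ..., n, ..., n) = i, where a_1 occurs l_{a_1} times, a_2 occurs l_{a_2} times, i occurs l_i times, and each v ∈ {i+1, ..., n} occurs l_v times. Then for all x_1, ..., x_{l_i − (l_{a_1}+l_{a_2})} ∈ {0, 1, ..., i−1}: (1) t(a_1, ..., a_1, a_2, ..., a_2, x_1, ..., x_{l_i−(l_{a_1}+l_{a_2})}, i+1, ..., i+1, ..., n, ..., n) ≠ a_1, where a_1 occurs l_{a_1}+l_{a_2} times and a_2 occurs l_{a_1}+l_{a_2} times; and (2) t(a_2, ..., a_2, a_1, ..., a_1, x_1, ..., x_{l_i−(l_{a_1}+l_{a_2})}, i+1, ..., i+1, ..., n, ..., n) ≠ a_2, where a_2 occurs l_{a_1}+l_{a_2} times followed by a_1 occurring l_{a_1}+l_{a_2}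 times. The same holds when the arguments are permuted by a fixed permutation applied uniformly in the hypothesis and the conclusions. -/
import Mathlib


/- The universe `B = {a₁, a₂, 0, 1, ..., n}` of size `n+3` is encoded as
`Fin (n+3)`, where `a₁` is encoded as `0`, `a₂` as `1`, and the element
`i ∈ {0, ..., n}` as `i+2`; this encoding is order-preserving for the order
`a₁ < a₂ < 0 < 1 < ⋯ < n`. -/

/-- Compatibility with a binary relation, given as a set of pairs. -/
def Compat2 {A : Type*} {k : ℕ} (t : (Fin k → A) → A) (S : Set (A × A)) : Prop :=
  ∀ u w : Fin k → A, (∀ j, (u j, w j) ∈ S) → (t u, t w) ∈ S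

/-- Compatibility with a unary relation `X`: `t` maps `X^k` into `X`. -/
def CompatUnary {A : Type*} {k : ℕ} (t : (Fin k → A) → A) (X : Set A) : Prop :=
  ∀ u : Fin k → A, (∀ j, u j ∈ X) → t u ∈ X

/-- An operation `t : A^k → A` is a near-unanimity (NU) operation if `k ≥ 3` and
any tuple whose coordinates all equal `x` except possibly one coordinate (with
value `y`) is mapped to the majority value `x`. -/
def IsNU {A : Type*} {k : ℕ} (t : (Fin k → A) → A) : Prop :=
  3 ≤ k ∧ ∀ (x y : A) (j : Fin k), t (Function.update (fun _ => x) j y) = x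

/-- The binary relation `R^i_j ⊆ B²` (for `i ∈ {0,…,n}`, `j ∈ {1,2}`):
`(({a₁,a₂,0,…,i-1} × {a₁,a₂,i}) \ {(a_j, i)}) ∪ {(l,l) : i+1 ≤ l ≤ n}`.
In the encoding: the first coordinate has value `≤ i+1`, the second has value `0`,
`1` or `i+2`, excluding the pair `(j-1, i+2)`; the diagonal pairs have value `≥ i+3`. -/
def Rb (n i j : ℕ) : Set (Fin (n + 3) × Fin (n + 3)) :=
  {p | (p.1.val ≤ i + 1 ∧ (p.2.val = 0 ∨ p.2.val = 1 ∨ p.2.val = i + 2) ∧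
          ¬(p.1.val = j - 1 ∧ p.2.val = i + 2)) ∨
        (p.1 = p.2 ∧ i + 3 ≤ p.1.val)}

/-- A polymorphism of the structure `𝔅 = (B; R¹₁, R¹₂, …, Rⁿ₁, Rⁿ₂, (X)_{∅ ≠ X ⊆ B})`:
an operation compatible with each `R^i_j` and with every nonempty unary relation. -/
def PolyB (n : ℕ) {k : ℕ} (t : (Fin k → Fin (n + 3)) → Fin (n + 3)) : Prop :=
  (∀ i ≤ n, ∀ j, (j = 1 ∨ j = 2) → Compat2 t (Rb n i j)) ∧
  (∀ X : Set (Fin (n + 3)), X.Nonempty → CompatUnary t X)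

/-- Lemma 4 of the paper. The coordinates `Fin k` are classified by a map `c`:
`Sum.inl 0` is the `a₁`-block (size `l_{a₁}`), `Sum.inl 1` the `a₂`-block (size
`l_{a₂}`), `Sum.inl 2` the first part of the `i`-block (size `l_{a₁}+l_{a₂} ≤ l_i`),
`Sum.inl 3` the rest of the `i`-block (size `l_i - (l_{a₁}+l_{a₂})`), and
`Sum.inr v` for `v ∈ {i+1,…,n}` the block of size `l_v` receiving the constant
value `v`.  (An arbitrary classification accounts for an arbitrary, fixed
permutation of the arguments applied uniformly in the hypothesis and conclusions.)
If the tuple with `a₁` on the `a₁`-block, `a₂` on the `a₂`-block, `i` on the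
`i`-block and `v` on each `v`-block is mapped by `t` to `i`, then:
(1) any tuple with `a₁` on the `a₁`-, `a₂`- and first-part blocks replaced so that
`a₁` occupies the `a₁`- and `a₂`-blocks (thus `l_{a₁}+l_{a₂}` coordinates) and `a₂`
occupies the first part of the `i`-block (`l_{a₁}+l_{a₂}` coordinates), with values
from `{0,…,i-1}` on the rest of the `i`-block and `v` on each `v`-block, is not
mapped to `a₁`; and
(2) symmetrically with the roles of `a₁` and `a₂` swapped, the value is not `a₂`. -/
theorem stmt14 (n k : ℕ) (t : (Fin k → Fin (n + 3)) → Fin (n + 3)) (ht : PolyB n t)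
    (i : ℕ) (hi : i ≤ n)
    (la1 la2 li : ℕ) (l : ℕ → ℕ)
    (hsum : la1 + la2 + li + (∑ v ∈ Finset.Icc (i + 1) n, l v) = k)
    (hle : la1 + la2 ≤ li)
    (c : Fin k → Sum ℕ ℕ)
    (hclrange : ∀ q s, c q = Sum.inl s → s < 4)
    (hcrrange : ∀ q v, c q = Sum.inr v → i + 1 ≤ v ∧ v ≤ n)
    (hc0 : (Finset.univ.filter (fun q => c q = Sum.inl 0)).card = la1)
    (hc1 : (Finset.univ.filter (fun q => c q = Sum.inl 1)).card = la2)
    (hc2 : (Finset.univ.filter (fun q => c q = Sum.inl 2)).card = la1 + la2)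
    (hc3 : (Finset.univ.filter (fun q => c q = Sum.inl 3)).card = li - (la1 + la2))
    (hcl : ∀ v, i + 1 ≤ v → v ≤ n →
      (Finset.univ.filter (fun q => c q = Sum.inr v)).card = l v)
    (hrow : ∀ w : Fin k → Fin (n + 3),
      (∀ q, (c q = Sum.inl 0 → w q = 0) ∧
            (c q = Sum.inl 1 → (w q).val = 1) ∧
            (c q = Sum.inl 2 → (w q).val = i + 2) ∧
            (c q = Sum.inl 3 → (w q).val = i + 2) ∧
            (∀ v, c q = Sum.inr v → (w q).val = v + 2)) →
      (t w).val = i + 2) :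
    (∀ w : Fin k → Fin (n + 3),
      (∀ q, ((c q = Sum.inl 0 ∨ c q = Sum.inl 1) → w q = 0) ∧
            (c q = Sum.inl 2 → (w q).val = 1) ∧
            (c q = Sum.inl 3 → 2 ≤ (w q).val ∧ (w q).val ≤ i + 1) ∧
            (∀ v, c q = Sum.inr v → (w q).val = v + 2)) →
      t w ≠ 0) ∧
    (∀ w : Fin k → Fin (n + 3),
      (∀ q, ((c q = Sum.inl 0 ∨ c q = Sum.inl 1) → (w q).val = 1) ∧
            (c q = Sum.inl 2 → w q = 0) ∧
            (c q = Sum.inl 3 → 2 ≤ (w q).val ∧ (w q).val ≤ i + 1) ∧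
            (∀ v, c q = Sum.inr v → (w q).val = v + 2)) →
      (t w).val ≠ 1) := by
  obtain ⟨hbin, -⟩ := ht
  classical
  set u : Fin k → Fin (n + 3) := fun q =>
    match c q with
    | Sum.inl 0 => ⟨0, by omega⟩
    | Sum.inl 1 => ⟨1, by omega⟩
    | Sum.inl _ => ⟨i + 2, by omega⟩
    | Sum.inr v => ⟨min v n + 2, by omega⟩ with hudef
  have hu0 : ∀ q, c q = Sum.inl 0 → (u q).val = 0 := by
    intro q h; simp [hudef, h]
  have hu1 : ∀ q, c q = Sum.inl 1 → (u q).val = 1 := by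
    intro q h; simp [hudef, h]
  have hu2 : ∀ q, c q = Sum.inl 2 → (u q).val = i + 2 := by
    intro q h; simp [hudef, h]
  have hu3 : ∀ q, c q = Sum.inl 3 → (u q).val = i + 2 := by
    intro q h; simp [hudef, h]
  have hur : ∀ q v, c q = Sum.inr v → (u q).val = v + 2 := by
    intro q v h
    have hv := hcrrange q v h
    simp [hudef, h]
    omega
  have huval : (t u).val = i + 2 := by
    apply hrow
    intro q
    refine ⟨fun h => ?_, hu1 q, hu2 q, hu3 q, hur q⟩
    apply Fin.ext
    simpa using hu0 q h
  constructor
  · intro w hw hcontra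
    have hmem : (t w, t u) ∈ Rb n i 1 := by
      apply hbin i hi 1 (Or.inl rfl) w u
      intro q
      simp only [Rb, Set.mem_setOf_eq, Fin.ext_iff]
      rcases hq : c q with s | v
      · have hs := hclrange q s hq
        have hw0 := (hw q).1
        have hw2 := (hw q).2.1
        have hw3 := (hw q).2.2.1
        interval_cases s
        · have h1 : (w q).val = 0 := by
            have := hw0 (Or.inl hq); simp [this]
          have h2 := hu0 q hq
          omega
        · have h1 : (w q).val = 0 := by
            have := hw0 (Or.inr hq); simp [this]
          have h2 := hu1 q hq
          omega
        · have h1 := hw2 hq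
          have h2 := hu2 q hq
          omega
        · have h1 := hw3 hq
          have h2 := hu3 q hq
          omega
      · have hv := hcrrange q v hq
        have h1 := (hw q).2.2.2 v hq
        have h2 := hur q v hq
        omega
    have hc : (t w).val = 0 := by simp [hcontra]
    simp only [Rb, Set.mem_setOf_eq, Fin.ext_iff] at hmem
    omega
  · intro w hw hcontra
    have hmem : (t w, t u) ∈ Rb n i 2 := by
      apply hbin i hi 2 (Or.inr rfl) w u
      intro q
      simp only [Rb, Set.mem_setOf_eq, Fin.ext_iff]
      rcases hq : c q with s | v
      · have hs := hclrange q s hq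
        have hw0 := (hw q).1
        have hw2 := (hw q).2.1
        have hw3 := (hw q).2.2.1
        interval_cases s
        · have h1 := hw0 (Or.inl hq)
          have h2 := hu0 q hq
          omega
        · have h1 := hw0 (Or.inr hq)
          have h2 := hu1 q hq
          omega
        · have h1 : (w q).val = 0 := by
            have := hw2 hq; simp [this]
          have h2 := hu2 q hq
          omega
        · have h1 := hw3 hq
          have h2 := hu3 q hq
          omega
      · have hv := hcrrange q v hq
        have h1 := (hw q).2.2.2 v hq
        have h2 := hur q v hq
        omega
    simp only [Rb, Set.mem_setOf_eq, Fin.ext_iff] at hmem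
    omega
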